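/- arXiv:2604.03707 — 3 statements merged into one kernel-verified Lean document; each statement's English description precedes it below -/
import Mathlib

section
/- Let V be an n-dimensional real vector space and let 0 ≤ k, l ≤ n. The operation * : End(∧^k V) × End(∧^l V) → End(∧^{k+l} V) is associative, commutative, and ℝ-bilinear. -/
open ExteriorAlgebra

variable {V : Type} [AddCommGroup V] [Module ℝ V]

/-- The canonical `k`-fold wedge `v₁ ∧ ⋯ ∧ v_k` as an element of the `k`-th exterior power. -/
noncomputable def iMultiP (k : ℕ) (v : Fin k → V) : ⋀[ℝ]^k V :=
  ⟨ExteriorAlgebra.ιMulti ℝ k v, ExteriorAlgebra.ιMulti_range ℝ k (Set.mem_range_self v)⟩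

/-- `IsStarMul k l A B AB` says `AB = A * B` per Bivens' definition. -/
def IsStarMul (k l : ℕ) (A : Module.End ℝ (⋀[ℝ]^k V)) (B : Module.End ℝ (⋀[ℝ]^l V))
    (AB : Module.End ℝ (⋀[ℝ]^(k+l) V)) : Prop :=
  ∀ x : Fin (k + l) → V,
    (AB (iMultiP (k+l) x) : ExteriorAlgebra ℝ V)
      = ((k.factorial * l.factorial : ℕ) : ℝ)⁻¹ •
        ∑ σ : Equiv.Perm (Fin (k + l)), ((Equiv.Perm.sign σ : ℤ) : ℝ) •
          ((A (iMultiP k (fun i => x (σ (Fin.castAdd l i)))) : ExteriorAlgebra ℝ V) *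
           (B (iMultiP l (fun j => x (σ (Fin.natAdd k j)))) : ExteriorAlgebra ℝ V))

noncomputable def altWedge {k l : ℕ} (α : V [⋀^Fin k]→ₗ[ℝ] ℝ) (β : V [⋀^Fin l]→ₗ[ℝ] ℝ) :
    V [⋀^Fin (k + l)]→ₗ[ℝ] ℝ :=
  AlternatingMap.domDomCongr finSumFinEquiv
    ((TensorProduct.lid ℝ ℝ).toLinearMap.compAlternatingMap (α.domCoprod β))

noncomputable def altCast {a b : ℕ} (h : a = b) (ω : V [⋀^Fin a]→ₗ[ℝ] ℝ) :
    V [⋀^Fin b]→ₗ[ℝ] ℝ :=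
  ω.domDomCongr (finCongr h)

noncomputable def wedgeList : (m : ℕ) → (Fin m → (V [⋀^Fin 2]→ₗ[ℝ] ℝ)) → (V [⋀^Fin (2*m)]→ₗ[ℝ] ℝ)
  | 0, _ => altCast (by ring) (AlternatingMap.constOfIsEmpty ℝ V (Fin 0) 1)
  | (m+1), ω => altCast (by ring)
      (altWedge (wedgeList m (fun a => ω a.castSucc)) (ω (Fin.last m)))

noncomputable def sgnIJ {m n : ℕ} (I J : Fin m → Fin n) : ℝ :=
  if h : Function.Injective I ∧ ∃ τ : Equiv.Perm (Fin m), J = I ∘ τ then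
    ((Equiv.Perm.sign h.2.choose : ℤ) : ℝ)
  else 0

noncomputable def epsI {m n : ℕ} (eps : Fin n → ℝ) (I : Fin m → Fin n) : ℝ :=
  if Function.Injective I then ∏ a, eps (I a) else 0

noncomputable def pontryaginForm (n k : ℕ) (Ω : Fin n → Fin n → (V [⋀^Fin 2]→ₗ[ℝ] ℝ)) :
    V [⋀^Fin (4*k)]→ₗ[ℝ] ℝ :=
  (((2 * Real.pi) ^ (2*k))⁻¹ * (((2*k).factorial : ℕ) : ℝ)⁻¹) •
    ∑ I : Fin (2*k) → Fin n, ∑ J : Fin (2*k) → Fin n,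
      sgnIJ I J • altCast (by ring) (wedgeList (2*k) (fun a => Ω (I a) (J a)))

def IsACT (C : V → V → V → V → ℝ) : Prop :=
  ((∀ (a : ℝ) (u u' v x y : V), C (a • u + u') v x y = a * C u v x y + C u' v x y) ∧
   (∀ (a : ℝ) (u v v' x y : V), C u (a • v + v') x y = a * C u v x y + C u v' x y) ∧
   (∀ (a : ℝ) (u v x x' y : V), C u v (a • x + x') y = a * C u v x y + C u v x' y) ∧
   (∀ (a : ℝ) (u v x y y' : V), C u v x (a • y + y') = a * C u v x y + C u v x y')) ∧
  (∀ u v x y, C u v x y = -C v u x y) ∧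
  (∀ u v x y, C u v x y = -C u v y x) ∧
  (∀ u v x y, C u v x y = C x y u v) ∧
  (∀ u v x y, C u v x y + C x u v y + C v x u y = 0)

def IsInducedForm (g : LinearMap.BilinForm ℝ V) (k : ℕ)
    (B : LinearMap.BilinForm ℝ (⋀[ℝ]^k V)) : Prop :=
  ∀ v w : Fin k → V,
    B (iMultiP k v) (iMultiP k w) = Matrix.det (Matrix.of fun i j => g (v i) (w j))

def IsCurvOp (C : V → V → V → V → ℝ) (B2 : LinearMap.BilinForm ℝ (⋀[ℝ]^2 V))
    (Chat : Module.End ℝ (⋀[ℝ]^2 V)) : Prop :=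
  ∀ u v x y : V, B2 (Chat (iMultiP 2 ![u, v])) (iMultiP 2 ![x, y]) = C u v x y

def IsCurvMatrix (g : LinearMap.BilinForm ℝ V) (C : V → V → V → V → ℝ) {n : ℕ}
    (e : Fin n → V) (Ω : Fin n → Fin n → (V [⋀^Fin 2]→ₗ[ℝ] ℝ)) : Prop :=
  ∀ (x y : V) (i m : Fin n), C x y (e i) (e m) = ∑ j, Ω i j ![x, y] * g (e j) (e m)

def IsExtPowMap (k : ℕ) (θ : V →ₗ[ℝ] V) (T : Module.End ℝ (⋀[ℝ]^k V)) : Prop :=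
  ∀ v : Fin k → V,
    (T (iMultiP k v) : ExteriorAlgebra ℝ V) = ExteriorAlgebra.ιMulti ℝ k (fun i => θ (v i))

noncomputable def Fform (m : ℕ) (Bm : LinearMap.BilinForm ℝ (⋀[ℝ]^m V))
    (A B : Module.End ℝ (⋀[ℝ]^m V)) : (Fin (m + m) → V) → ℝ :=
  fun x => (((m.factorial : ℕ) : ℝ)^2)⁻¹ * ∑ σ : Equiv.Perm (Fin (m + m)),
    ((Equiv.Perm.sign σ : ℤ) : ℝ) *
      Bm (A (iMultiP m (fun i => x (σ (Fin.castAdd m i)))))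
         (B (iMultiP m (fun i => x (σ (Fin.natAdd m i)))))

noncomputable def ricci {n : ℕ} (C : V → V → V → V → ℝ) (b d : Fin n → V) : V → V → ℝ :=
  fun x y => ∑ j, C (d j) x y (b j)

noncomputable def scalCurv {n : ℕ} (C : V → V → V → V → ℝ) (b d : Fin n → V) : ℝ :=
  ∑ j, ricci C b d (d j) (b j)

noncomputable def schouten {n : ℕ} (g : LinearMap.BilinForm ℝ V) (C : V → V → V → V → ℝ)
    (b d : Fin n → V) : V → V → ℝ :=
  fun x y => (1/((n : ℝ) - 2)) *
    (ricci C b d x y - (scalCurv C b d / (2*((n : ℝ) - 1))) * g x y)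

def kulkarniNomizu (h k : V → V → ℝ) : V → V → V → V → ℝ :=
  fun u v x y => h u y * k v x + h v x * k u y - h u x * k v y - h v y * k u x

noncomputable def weyl {n : ℕ} (g : LinearMap.BilinForm ℝ V) (C : V → V → V → V → ℝ)
    (b d : Fin n → V) : V → V → V → V → ℝ :=
  fun u v x y => C u v x y -
    kulkarniNomizu (schouten g C b d) (fun a b' => g a b') u v x y

noncomputable def wedgeBig : (L : List ((d : ℕ) × (V [⋀^Fin d]→ₗ[ℝ] ℝ))) →
    V [⋀^Fin ((L.map Sigma.fst).sum)]→ₗ[ℝ] ℝ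
  | [] => altCast (by simp) (AlternatingMap.constOfIsEmpty ℝ V (Fin 0) 1)
  | p :: L => altCast (by simp) (altWedge p.2 (wedgeBig L))

/-!
Write `Â v = A (v₁ ∧ ⋯ ∧ v_k)`. Then `(A * B) x` is `(k! l!)⁻¹` times the antisymmetrization
over `σ ∈ S_{k+l}` of `Â (x ∘ σ)|_{first k} ∧ B̂ (x ∘ σ)|_{last l}`, which is visibly bilinear.
Unfolding `(A * B) * C` gives a double sum over `σ ∈ S_{k+l+m}` and `τ ∈ S_{k+l}`; extending `τ`
to `S_{k+l+m}` and absorbing it into `σ` turns it into `(k+l)!` copies of one antisymmetrized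
triple product, and `A * (B * C)` reduces in the same way to `(l+m)!` copies of it.
For commutativity, reindex by the rotation of `Fin (k+l)` exchanging the two blocks: its sign
`(-1)^{kl}` cancels the sign of the graded commutativity `a ∧ b = (-1)^{kl} b ∧ a` for
`a ∈ ⋀^k V`, `b ∈ ⋀^l V`.
-/

open Equiv Equiv.Perm

lemma val_finRotate_pow (n q : ℕ) (i : Fin n) : ((finRotate n ^ q) i : ℕ) = (i + q) % n := by
  obtain ⟨n, rfl⟩ : ∃ n', n = n' + 1 := Nat.exists_eq_add_one.2 (Fin.pos i)
  induction q with
  | zero => simp [Nat.mod_eq_of_lt i.isLt]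
  | succ q ih =>
    rw [pow_succ', Perm.mul_apply, finRotate_apply, Fin.val_add, ih, Fin.val_one',
      Nat.mod_add_mod, Nat.add_mod_mod, add_assoc]

lemma finRotate_pow_castAdd (k l : ℕ) (i : Fin k) :
    (finRotate (k + l) ^ l) (Fin.castAdd l i) = Fin.cast (add_comm l k) (Fin.natAdd l i) := by
  ext
  simp only [val_finRotate_pow, Fin.val_castAdd, Fin.val_cast, Fin.val_natAdd]
  rw [Nat.mod_eq_of_lt (by omega), add_comm]

lemma finRotate_pow_natAdd (k l : ℕ) (j : Fin l) :
    (finRotate (k + l) ^ l) (Fin.natAdd k j) = Fin.cast (add_comm l k) (Fin.castAdd k j) := by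
  ext
  simp only [val_finRotate_pow, Fin.val_natAdd, Fin.val_cast, Fin.val_castAdd]
  rw [add_right_comm, Nat.add_mod_left, Nat.mod_eq_of_lt (by omega)]

lemma sign_finRotate_pow (k l : ℕ) : sign (finRotate (k + l) ^ l) = (-1) ^ (k * l) := by
  rcases l with _ | l
  · simp
  · rw [map_pow, sign_finRotate, ← pow_mul, ← add_assoc, Nat.add_sub_cancel, Nat.add_mul,
      pow_add, (Nat.even_mul_succ_self l).neg_one_pow, mul_one]

namespace ExteriorAlgebra

variable {R M : Type*} [CommRing R] [AddCommGroup M] [Module R M]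

lemma ιMulti_comp_cast {a b : ℕ} (h : a = b) (v : Fin b → M) :
    ιMulti R a (v ∘ Fin.cast h) = ιMulti R b v := by
  subst h
  rfl

lemma ιMulti_mul_ιMulti_comm {k l : ℕ} (u : Fin k → M) (w : Fin l → M) :
    ιMulti R k u * ιMulti R l w = ((-1 : ℤˣ) ^ (k * l)) • (ιMulti R l w * ιMulti R k u) := by
  have hperm : Fin.append u w
      = (Fin.append w u ∘ Fin.cast (add_comm k l)) ∘ (finRotate (k + l) ^ l) := by
    ext t
    refine Fin.addCases (fun i => ?_) (fun j => ?_) t <;>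
      simp [finRotate_pow_castAdd, finRotate_pow_natAdd]
  rw [ιMulti_mul_ιMulti, ιMulti_mul_ιMulti, hperm, AlternatingMap.map_perm, sign_finRotate_pow,
    ιMulti_comp_cast]

lemma mul_comm_of_mem_exteriorPower {k l : ℕ} {a b : ExteriorAlgebra R M}
    (ha : a ∈ ⋀[R]^k M) (hb : b ∈ ⋀[R]^l M) :
    a * b = ((-1 : ℤˣ) ^ (k * l)) • (b * a) := by
  rw [← ιMulti_span_fixedDegree] at ha hb
  induction ha using Submodule.span_induction with
  | mem _ hu =>
    obtain ⟨u, rfl⟩ := hu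
    induction hb using Submodule.span_induction with
    | mem _ hw =>
      obtain ⟨w, rfl⟩ := hw
      exact ιMulti_mul_ιMulti_comm u w
    | zero => simp
    | add _ _ _ _ h₁ h₂ => rw [mul_add, add_mul, h₁, h₂, smul_add]
    | smul c _ _ h => rw [mul_smul_comm, smul_mul_assoc, h, smul_comm]
  | zero => simp
  | add _ _ _ _ h₁ h₂ => rw [add_mul, mul_add, h₁, h₂, smul_add]
  | smul c _ _ h => rw [smul_mul_assoc, mul_smul_comm, h, smul_comm]

end ExteriorAlgebra

section AltSum

variable {ι κ X E : Type*} [Fintype ι] [DecidableEq ι] [Fintype κ] [DecidableEq κ]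
  [AddCommGroup E]

noncomputable def altSum (F : (ι → X) → E) (x : ι → X) : E :=
  ∑ σ : Perm ι, sign σ • F (x ∘ σ)

lemma altSum_precomp_perm (F : (ι → X) → E) (π : Perm ι) (x : ι → X) :
    altSum (fun y => F (y ∘ π)) x = sign π • altSum F x := by
  rw [altSum, altSum, Finset.smul_sum, ← Equiv.sum_comp (Equiv.mulRight π⁻¹)]
  refine Finset.sum_congr rfl fun σ _ => ?_
  rw [coe_mulRight, Perm.sign_mul, sign_inv, smul_smul, mul_comm]
  congr 2
  ext i
  simp

lemma altSum_comp_equiv (e : ι ≃ κ) (F : (κ → X) → E) (x : κ → X) :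
    altSum (fun y => F (y ∘ e.symm)) (x ∘ e) = altSum F x := by
  rw [altSum, altSum, ← Equiv.sum_comp (Equiv.permCongr e)]
  refine Finset.sum_congr rfl fun σ _ => ?_
  rw [sign_permCongr]
  rfl

lemma altSum_smul {S : Type*} [Monoid S] [DistribMulAction S E] [SMulCommClass ℤˣ S E]
    (c : S) (F : (ι → X) → E) (x : ι → X) :
    altSum (fun y => c • F y) x = c • altSum F x := by
  simp only [altSum, Finset.smul_sum, smul_comm c]

lemma altSum_sum {α : Type*} (s : Finset α) (F : α → (ι → X) → E) (x : ι → X) :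
    altSum (fun y => ∑ a ∈ s, F a y) x = ∑ a ∈ s, altSum (F a) x := by
  simp only [altSum, Finset.smul_sum]
  exact Finset.sum_comm

end AltSum

def castAddPerm {a : ℕ} (b : ℕ) (τ : Perm (Fin a)) : Perm (Fin (a + b)) :=
  finSumFinEquiv.permCongr (τ.sumCongr 1)

def natAddPerm (a : ℕ) {b : ℕ} (τ : Perm (Fin b)) : Perm (Fin (a + b)) :=
  finSumFinEquiv.permCongr ((1 : Perm (Fin a)).sumCongr τ)

@[simp] lemma castAddPerm_castAdd {a : ℕ} (b : ℕ) (τ : Perm (Fin a)) (i : Fin a) :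
    castAddPerm b τ (Fin.castAdd b i) = Fin.castAdd b (τ i) := by
  simp [castAddPerm]

@[simp] lemma castAddPerm_natAdd {a : ℕ} (b : ℕ) (τ : Perm (Fin a)) (j : Fin b) :
    castAddPerm b τ (Fin.natAdd a j) = Fin.natAdd a j := by
  simp [castAddPerm]

@[simp] lemma natAddPerm_castAdd (a : ℕ) {b : ℕ} (τ : Perm (Fin b)) (i : Fin a) :
    natAddPerm a τ (Fin.castAdd b i) = Fin.castAdd b i := by
  simp [natAddPerm]

@[simp] lemma natAddPerm_natAdd (a : ℕ) {b : ℕ} (τ : Perm (Fin b)) (j : Fin b) :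
    natAddPerm a τ (Fin.natAdd a j) = Fin.natAdd a (τ j) := by
  simp [natAddPerm]

@[simp] lemma sign_castAddPerm {a : ℕ} (b : ℕ) (τ : Perm (Fin a)) :
    sign (castAddPerm b τ) = sign τ := by
  simp [castAddPerm]

@[simp] lemma sign_natAddPerm (a : ℕ) {b : ℕ} (τ : Perm (Fin b)) :
    sign (natAddPerm a τ) = sign τ := by
  simp [natAddPerm]

section WedgeSum

variable {X E : Type*} [Ring E]

noncomputable def wedgeSum (k l : ℕ) (f : (Fin k → X) → E) (g : (Fin l → X) → E) :
    (Fin (k + l) → X) → E :=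
  altSum fun y => f (y ∘ Fin.castAdd l) * g (y ∘ Fin.natAdd k)

noncomputable def wedgeSum₃ (k l m : ℕ) (f : (Fin k → X) → E) (g : (Fin l → X) → E)
    (h : (Fin m → X) → E) : (Fin (k + l + m) → X) → E :=
  altSum fun y => f (y ∘ Fin.castAdd m ∘ Fin.castAdd l) * g (y ∘ Fin.castAdd m ∘ Fin.natAdd k) *
    h (y ∘ Fin.natAdd (k + l))

lemma wedgeSum_comm {k l : ℕ} {f : (Fin k → X) → E} {g : (Fin l → X) → E}
    (hfg : ∀ u w, f u * g w = ((-1 : ℤˣ) ^ (k * l)) • (g w * f u)) (x : Fin (l + k) → X) :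
    wedgeSum k l f g (x ∘ Fin.cast (add_comm k l)) = wedgeSum l k g f x := by
  set β := finRotate (k + l) ^ l
  have hswap : (fun y : Fin (k + l) → X =>
      g ((y ∘ (finCongr (add_comm k l)).symm) ∘ Fin.castAdd k) *
        f ((y ∘ (finCongr (add_comm k l)).symm) ∘ Fin.natAdd l))
      = fun y => ((-1 : ℤˣ) ^ (k * l)) •
          (f ((y ∘ β) ∘ Fin.castAdd l) * g ((y ∘ β) ∘ Fin.natAdd k)) := by
    ext y
    rw [hfg, smul_smul, ← pow_add, ← two_mul, pow_mul, Int.units_sq, one_pow, one_smul]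
    congr 2 <;> ext i <;> simp [β, finRotate_pow_castAdd, finRotate_pow_natAdd]
  rw [wedgeSum, wedgeSum, ← altSum_comp_equiv (finCongr (add_comm k l)), hswap, altSum_smul,
    altSum_precomp_perm (fun y => f (y ∘ Fin.castAdd l) * g (y ∘ Fin.natAdd k)),
    sign_finRotate_pow, smul_smul, ← pow_add, ← two_mul, pow_mul, Int.units_sq, one_pow, one_smul]
  rfl

lemma altSum_altSum_castAdd_mul {a b : ℕ} (F : (Fin a → X) → E) (H : (Fin (a + b) → X) → E)
    (hH : ∀ τ z, H (z ∘ castAddPerm b τ) = H z) (x : Fin (a + b) → X) :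
    altSum (fun z => altSum F (z ∘ Fin.castAdd b) * H z) x
      = a.factorial • altSum (fun z => F (z ∘ Fin.castAdd b) * H z) x := by
  set G := fun z => F (z ∘ Fin.castAdd b) * H z
  have hinner : (fun z => altSum F (z ∘ Fin.castAdd b) * H z)
      = fun z => ∑ τ : Perm (Fin a), sign τ • G (z ∘ castAddPerm b τ) := by
    ext z
    rw [altSum, Finset.sum_mul]
    refine Finset.sum_congr rfl fun τ _ => ?_
    rw [smul_mul_assoc, ← hH τ z]
    show _ = sign τ • (F ((z ∘ castAddPerm b τ) ∘ Fin.castAdd b) * H (z ∘ castAddPerm b τ))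
    congr 3
    ext i
    simp
  simp only [hinner, altSum_sum, altSum_smul, altSum_precomp_perm G, sign_castAddPerm, smul_smul,
    Int.units_mul_self, one_smul, Finset.sum_const, Finset.card_univ, Fintype.card_perm,
    Fintype.card_fin]

lemma altSum_mul_altSum_natAdd {a b : ℕ} (F : (Fin b → X) → E) (H : (Fin (a + b) → X) → E)
    (hH : ∀ τ z, H (z ∘ natAddPerm a τ) = H z) (x : Fin (a + b) → X) :
    altSum (fun z => H z * altSum F (z ∘ Fin.natAdd a)) x
      = b.factorial • altSum (fun z => H z * F (z ∘ Fin.natAdd a)) x := by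
  set G := fun z => H z * F (z ∘ Fin.natAdd a)
  have hinner : (fun z => H z * altSum F (z ∘ Fin.natAdd a))
      = fun z => ∑ τ : Perm (Fin b), sign τ • G (z ∘ natAddPerm a τ) := by
    ext z
    rw [altSum, Finset.mul_sum]
    refine Finset.sum_congr rfl fun τ _ => ?_
    rw [mul_smul_comm, ← hH τ z]
    show _ = sign τ • (H (z ∘ natAddPerm a τ) * F ((z ∘ natAddPerm a τ) ∘ Fin.natAdd a))
    congr 3
    ext i
    simp
  simp only [hinner, altSum_sum, altSum_smul, altSum_precomp_perm G, sign_natAddPerm, smul_smul,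
    Int.units_mul_self, one_smul, Finset.sum_const, Finset.card_univ, Fintype.card_perm,
    Fintype.card_fin]

lemma wedgeSum_smul_left {R : Type*} [CommSemiring R] [Algebra R E] (c : R) {k l : ℕ}
    (f : (Fin k → X) → E) (g : (Fin l → X) → E) (x : Fin (k + l) → X) :
    wedgeSum k l (fun y => c • f y) g x = c • wedgeSum k l f g x := by
  simp only [wedgeSum, smul_mul_assoc, altSum_smul]

lemma wedgeSum_smul_right {R : Type*} [CommSemiring R] [Algebra R E] (c : R) {k l : ℕ}
    (f : (Fin k → X) → E) (g : (Fin l → X) → E) (x : Fin (k + l) → X) :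
    wedgeSum k l f (fun y => c • g y) x = c • wedgeSum k l f g x := by
  simp only [wedgeSum, mul_smul_comm, altSum_smul]

lemma wedgeSum_wedgeSum_left (k l m : ℕ) (f : (Fin k → X) → E) (g : (Fin l → X) → E)
    (h : (Fin m → X) → E) (x : Fin (k + l + m) → X) :
    wedgeSum (k + l) m (wedgeSum k l f g) h x = (k + l).factorial • wedgeSum₃ k l m f g h x :=
  altSum_altSum_castAdd_mul _ _ (fun τ z => congrArg h (by ext; simp)) x

lemma wedgeSum_wedgeSum_right (k l m : ℕ) (f : (Fin k → X) → E) (g : (Fin l → X) → E)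
    (h : (Fin m → X) → E) (x : Fin (k + (l + m)) → X) :
    wedgeSum k (l + m) f (wedgeSum l m g h) x
      = (l + m).factorial • wedgeSum₃ k l m f g h (x ∘ Fin.cast (add_assoc k l m)) := by
  unfold wedgeSum
  rw [altSum_mul_altSum_natAdd _ _ (fun τ z => congrArg f (by ext; simp)),
    ← altSum_comp_equiv (finCongr (add_assoc k l m))]
  congr 2
  ext y
  have hC : ((y ∘ (finCongr (add_assoc k l m)).symm) ∘ Fin.natAdd k) ∘ Fin.natAdd l
      = y ∘ Fin.natAdd (k + l) := by
    ext i
    simp [Fin.natAdd_natAdd]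
  rw [hC, mul_assoc]
  rfl

end WedgeSum

noncomputable def onWedge {k : ℕ} (A : Module.End ℝ (⋀[ℝ]^k V)) (v : Fin k → V) :
    ExteriorAlgebra ℝ V :=
  A (iMultiP k v)

lemma onWedge_mem {k : ℕ} (A : Module.End ℝ (⋀[ℝ]^k V)) (v : Fin k → V) :
    onWedge A v ∈ ⋀[ℝ]^k V :=
  (A _).2

lemma isStarMul_iff {k l : ℕ} {A : Module.End ℝ (⋀[ℝ]^k V)} {B : Module.End ℝ (⋀[ℝ]^l V)}
    {AB : Module.End ℝ (⋀[ℝ]^(k + l) V)} :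
    IsStarMul k l A B AB ↔ ∀ x, (AB (iMultiP (k + l) x) : ExteriorAlgebra ℝ V)
      = ((k.factorial * l.factorial : ℕ) : ℝ)⁻¹ • wedgeSum k l (onWedge A) (onWedge B) x := by
  simp only [IsStarMul, wedgeSum, altSum, Units.smul_def, Int.cast_smul_eq_zsmul]
  rfl

lemma ext_iMultiP {n : ℕ} {S T : Module.End ℝ (⋀[ℝ]^n V)}
    (h : ∀ x, (S (iMultiP n x) : ExteriorAlgebra ℝ V) = T (iMultiP n x)) : S = T :=
  exteriorPower.linearMap_ext (AlternatingMap.ext fun x => Subtype.ext (h x))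

lemma coe_apply_eq_of_iMultiP {n n' : ℕ} (hn : n = n') {S : Module.End ℝ (⋀[ℝ]^n V)}
    {T : Module.End ℝ (⋀[ℝ]^n' V)}
    (h : ∀ x, (S (iMultiP n (x ∘ Fin.cast hn)) : ExteriorAlgebra ℝ V) = T (iMultiP n' x))
    {ξ : ⋀[ℝ]^n V} {η : ⋀[ℝ]^n' V} (hξη : (ξ : ExteriorAlgebra ℝ V) = η) :
    (S ξ : ExteriorAlgebra ℝ V) = T η := by
  subst hn
  rw [Subtype.ext hξη, ext_iMultiP h]

namespace IsStarMul

variable {k l m : ℕ} {A A' : Module.End ℝ (⋀[ℝ]^k V)} {B B' : Module.End ℝ (⋀[ℝ]^l V)}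
  {P Q : Module.End ℝ (⋀[ℝ]^(k + l) V)}

lemma unique (hP : IsStarMul k l A B P) (hQ : IsStarMul k l A B Q) : P = Q :=
  ext_iMultiP fun x => (hP x).trans (hQ x).symm

lemma add_left (hP : IsStarMul k l A B P) (hQ : IsStarMul k l A' B Q) :
    IsStarMul k l (A + A') B (P + Q) := by
  intro x
  simp only [LinearMap.add_apply, Submodule.coe_add, hP x, hQ x, add_mul, smul_add,
    Finset.sum_add_distrib]

lemma add_right (hP : IsStarMul k l A B P) (hQ : IsStarMul k l A B' Q) :
    IsStarMul k l A (B + B') (P + Q) := by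
  intro x
  simp only [LinearMap.add_apply, Submodule.coe_add, hP x, hQ x, mul_add, smul_add,
    Finset.sum_add_distrib]

lemma smul_left (c : ℝ) (hP : IsStarMul k l A B P) : IsStarMul k l (c • A) B (c • P) := by
  intro x
  simp only [LinearMap.smul_apply, Submodule.coe_smul, hP x, smul_mul_assoc, Finset.smul_sum,
    smul_comm c]

lemma smul_right (c : ℝ) (hP : IsStarMul k l A B P) : IsStarMul k l A (c • B) (c • P) := by
  intro x
  simp only [LinearMap.smul_apply, Submodule.coe_smul, hP x, mul_smul_comm, Finset.smul_sum,
    smul_comm c]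

lemma coe_apply_comm {BA : Module.End ℝ (⋀[ℝ]^(l + k) V)} (hP : IsStarMul k l A B P)
    (hBA : IsStarMul l k B A BA) {ξ : ⋀[ℝ]^(k + l) V} {η : ⋀[ℝ]^(l + k) V}
    (hξη : (ξ : ExteriorAlgebra ℝ V) = η) :
    (P ξ : ExteriorAlgebra ℝ V) = BA η := by
  refine coe_apply_eq_of_iMultiP (add_comm k l) (fun x => ?_) hξη
  rw [isStarMul_iff.1 hP, isStarMul_iff.1 hBA, mul_comm k.factorial,
    wedgeSum_comm fun u w => mul_comm_of_mem_exteriorPower (onWedge_mem A u) (onWedge_mem B w)]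

lemma coe_apply_assoc {C : Module.End ℝ (⋀[ℝ]^m V)} {BC : Module.End ℝ (⋀[ℝ]^(l + m) V)}
    {ABC : Module.End ℝ (⋀[ℝ]^(k + l + m) V)} {ABC' : Module.End ℝ (⋀[ℝ]^(k + (l + m)) V)}
    (hP : IsStarMul k l A B P) (hABC : IsStarMul (k + l) m P C ABC)
    (hBC : IsStarMul l m B C BC) (hABC' : IsStarMul k (l + m) A BC ABC')
    {ξ : ⋀[ℝ]^(k + l + m) V} {η : ⋀[ℝ]^(k + (l + m)) V} (hξη : (ξ : ExteriorAlgebra ℝ V) = η) :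
    (ABC ξ : ExteriorAlgebra ℝ V) = ABC' η := by
  refine coe_apply_eq_of_iMultiP (add_assoc k l m) (fun x => ?_) hξη
  have hP' : onWedge P = fun y => _ • wedgeSum k l (onWedge A) (onWedge B) y :=
    funext (isStarMul_iff.1 hP)
  have hBC' : onWedge BC = fun y => _ • wedgeSum l m (onWedge B) (onWedge C) y :=
    funext (isStarMul_iff.1 hBC)
  rw [isStarMul_iff.1 hABC, isStarMul_iff.1 hABC', hP', hBC', wedgeSum_smul_left,
    wedgeSum_smul_right, wedgeSum_wedgeSum_left, wedgeSum_wedgeSum_right,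
    ← Nat.cast_smul_eq_nsmul ℝ, ← Nat.cast_smul_eq_nsmul ℝ, smul_smul, smul_smul, smul_smul,
    smul_smul]
  congr 1
  push_cast
  field_simp

end IsStarMul

/-- The operation `*` on exterior-power endomorphisms is associative,
commutative and `ℝ`-bilinear.  Each occurrence of a `*`-product is characterized by the
predicate `IsStarMul`; commutativity and associativity are stated via the (injective)
coercion into the exterior algebra, which identifies `⋀^(k+l) V` with `⋀^(l+k) V` and
`⋀^((k+l)+m) V` with `⋀^(k+(l+m)) V`. -/
theorem starMul_assoc_comm_bilinear
    (k l m : ℕ)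
    (A A' : Module.End ℝ (⋀[ℝ]^k V)) (B B' : Module.End ℝ (⋀[ℝ]^l V))
    (Cm : Module.End ℝ (⋀[ℝ]^m V)) (c : ℝ)
    (AB : Module.End ℝ (⋀[ℝ]^(k+l) V)) (hAB : IsStarMul k l A B AB)
    (BA : Module.End ℝ (⋀[ℝ]^(l+k) V)) (hBA : IsStarMul l k B A BA)
    (BC : Module.End ℝ (⋀[ℝ]^(l+m) V)) (hBC : IsStarMul l m B Cm BC)
    (ABC₁ : Module.End ℝ (⋀[ℝ]^(k+l+m) V)) (hABC₁ : IsStarMul (k+l) m AB Cm ABC₁)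
    (ABC₂ : Module.End ℝ (⋀[ℝ]^(k+(l+m)) V)) (hABC₂ : IsStarMul k (l+m) A BC ABC₂)
    (A'B : Module.End ℝ (⋀[ℝ]^(k+l) V)) (hA'B : IsStarMul k l A' B A'B)
    (SAB : Module.End ℝ (⋀[ℝ]^(k+l) V)) (hSAB : IsStarMul k l (A + A') B SAB)
    (cAB : Module.End ℝ (⋀[ℝ]^(k+l) V)) (hcAB : IsStarMul k l (c • A) B cAB)
    (AB' : Module.End ℝ (⋀[ℝ]^(k+l) V)) (hAB' : IsStarMul k l A B' AB')
    (SAB' : Module.End ℝ (⋀[ℝ]^(k+l) V)) (hSAB' : IsStarMul k l A (B + B') SAB')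
    (cAB' : Module.End ℝ (⋀[ℝ]^(k+l) V)) (hcAB' : IsStarMul k l A (c • B) cAB') :
    -- commutativity: A * B = B * A
    (∀ (ξ : ⋀[ℝ]^(k+l) V) (η : ⋀[ℝ]^(l+k) V),
      (ξ : ExteriorAlgebra ℝ V) = (η : ExteriorAlgebra ℝ V) →
        (AB ξ : ExteriorAlgebra ℝ V) = (BA η : ExteriorAlgebra ℝ V)) ∧
    -- associativity: (A * B) * C = A * (B * C)
    (∀ (ξ : ⋀[ℝ]^(k+l+m) V) (η : ⋀[ℝ]^(k+(l+m)) V),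
      (ξ : ExteriorAlgebra ℝ V) = (η : ExteriorAlgebra ℝ V) →
        (ABC₁ ξ : ExteriorAlgebra ℝ V) = (ABC₂ η : ExteriorAlgebra ℝ V)) ∧
    -- ℝ-bilinearity
    SAB = AB + A'B ∧ cAB = c • AB ∧ SAB' = AB + AB' ∧ cAB' = c • AB := by
  refine ⟨fun _ _ h => hAB.coe_apply_comm hBA h, fun _ _ h => hAB.coe_apply_assoc hABC₁ hBC hABC₂ h,
    hSAB.unique (hAB.add_left hA'B), hcAB.unique (hAB.smul_left c),
    hSAB'.unique (hAB.add_right hAB'), hcAB'.unique (hAB.smul_right c)⟩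
end

section
/- Let (V, g) be an n-dimensional scalar product space, let θ ∈ O(V, g), and let C be an algebraic curvature tensor on V that is θ-even or θ-odd. Then for all 1 ≤ k ≤ ⌊n/2⌋, the kth Pontryagin form of C is fixed by the map induced by θ: ∧^{4k}θ*(ϖ_k(C)) = ϖ_k(C), where ∧^{4k}θ* is the map induced on ∧^{4k}V* by θ. -/
open ExteriorAlgebra

variable {V : Type} [AddCommGroup V] [Module ℝ V]

/-!
Let `R(x,y)` be the curvature endomorphisms, so that `Ω(x,y)` is their matrix in the basis `e`.
If `θ*C = ε C` with `ε = ±1`, the isometry `θ` gives `R(θx, θy) = ε θ R(x,y) θ⁻¹`, so pulling `Ω`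
back along `θ` replaces it by `ε A Ω A⁻¹` for an invertible matrix `A`. Up to a constant, the
Pontryagin form is `Σ_{I,J} δ^I_J Ω_{I₁J₁} ∧ ⋯ ∧ Ω_{I₂ₖJ₂ₖ}`, where `δ^I_J = sgnIJ I J` is the
generalized Kronecker delta. It is homogeneous of even degree `2k` in `Ω`, so `ε` drops out, and it
is invariant under conjugation, because contracting `δ` with `A` and `A⁻¹` gives back `δ`.
-/

open scoped Matrix

instance {R M N ι : Type*} [Semiring R] [AddCommMonoid M] [Module R M] [AddCommMonoid N]
    [Module R N] : IsZeroApply (M [⋀^ι]→ₗ[R] N) (ι → M) N :=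
  ⟨fun _ => rfl⟩

instance {R M N ι : Type*} [Semiring R] [AddCommMonoid M] [Module R M] [AddCommMonoid N]
    [Module R N] : IsAddApply (M [⋀^ι]→ₗ[R] N) (ι → M) N :=
  ⟨fun _ _ _ => rfl⟩

def AlternatingMap.compLinearMapₗ {R M M₂ N ι : Type*} [CommSemiring R] [AddCommMonoid M]
    [Module R M] [AddCommMonoid M₂] [Module R M₂] [AddCommMonoid N] [Module R N]
    (g : M₂ →ₗ[R] M) : (M [⋀^ι]→ₗ[R] N) →ₗ[R] M₂ [⋀^ι]→ₗ[R] N where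
  toFun f := f.compLinearMap g
  map_add' _ _ := rfl
  map_smul' _ _ := rfl

def linearMapOfMapSmulAdd {R M : Type*} [Ring R] [AddCommGroup M] [Module R M] (f : M → R)
    (h : ∀ (a : R) (u u' : M), f (a • u + u') = a * f u + f u') : M →ₗ[R] R where
  toFun := f
  map_add' u u' := by simpa using h 1 u u'
  map_smul' a u := by
    have h0 : f 0 = 0 := by simpa using h 1 0 0
    simpa [h0] using h a u 0

section Wedge

theorem altCast_eq_domDomCongrₗ {a b : ℕ} (h : a = b) (ω : V [⋀^Fin a]→ₗ[ℝ] ℝ) :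
    altCast h ω = AlternatingMap.domDomCongrₗ ℝ (finCongr h) ω := rfl

noncomputable def altWedgeₗ (k l : ℕ) :
    (V [⋀^Fin k]→ₗ[ℝ] ℝ) →ₗ[ℝ] (V [⋀^Fin l]→ₗ[ℝ] ℝ) →ₗ[ℝ] V [⋀^Fin (k + l)]→ₗ[ℝ] ℝ :=
  (TensorProduct.mk ℝ _ _).compr₂
    ((AlternatingMap.domDomCongrₗ ℝ finSumFinEquiv).toLinearMap ∘ₗ
      (TensorProduct.lid ℝ ℝ).toLinearMap.compAlternatingMapₗ ℝ ∘ₗ AlternatingMap.domCoprod')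

noncomputable def wedgeListMultilinear : (m : ℕ) →
    MultilinearMap ℝ (fun _ : Fin m => V [⋀^Fin 2]→ₗ[ℝ] ℝ) (V [⋀^Fin (2 * m)]→ₗ[ℝ] ℝ)
  | 0 => MultilinearMap.constOfIsEmpty ℝ _ (wedgeList 0 Fin.elim0)
  | m + 1 => (AlternatingMap.domDomCongrₗ ℝ (finCongr (by ring))).toLinearMap.compMultilinearMap
      ((altWedgeₗ (2 * m) 2).compMultilinearMap (wedgeListMultilinear m)).uncurryRight

theorem wedgeListMultilinear_apply : ∀ (m : ℕ) (ω : Fin m → V [⋀^Fin 2]→ₗ[ℝ] ℝ),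
    wedgeListMultilinear m ω = wedgeList m ω
  | 0, ω => by rw [Subsingleton.elim ω Fin.elim0]; rfl
  | m + 1, ω => by
    simp only [wedgeListMultilinear, LinearMap.compMultilinearMap_apply,
      MultilinearMap.uncurryRight_apply, wedgeListMultilinear_apply m]
    rfl

theorem wedgeList_sum_smul {κ : Type*} [Fintype κ] (m : ℕ) (c : Fin m → κ → ℝ)
    (ω : κ → V [⋀^Fin 2]→ₗ[ℝ] ℝ) :
    wedgeList m (fun a => ∑ t, c a t • ω t)
      = ∑ T : Fin m → κ, (∏ a, c a (T a)) • wedgeList m (fun a => ω (T a)) := by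
  simp only [← wedgeListMultilinear_apply, MultilinearMap.map_sum, MultilinearMap.map_smul_univ]

theorem wedgeList_smul (m : ℕ) (c : ℝ) (ω : Fin m → V [⋀^Fin 2]→ₗ[ℝ] ℝ) :
    wedgeList m (fun a => c • ω a) = c ^ m • wedgeList m ω := by
  simpa only [← wedgeListMultilinear_apply, Finset.prod_const, Finset.card_univ, Fintype.card_fin]
    using (wedgeListMultilinear m).map_smul_univ (fun _ => c) ω

theorem altWedge_compLinearMap {k l : ℕ} (α : V [⋀^Fin k]→ₗ[ℝ] ℝ) (β : V [⋀^Fin l]→ₗ[ℝ] ℝ)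
    (θ : V →ₗ[ℝ] V) :
    (altWedge α β).compLinearMap θ = altWedge (α.compLinearMap θ) (β.compLinearMap θ) := by
  ext v
  simp only [altWedge, AlternatingMap.compLinearMap_apply, AlternatingMap.domDomCongr_apply,
    LinearMap.compAlternatingMap_apply, AlternatingMap.domCoprod_apply, sum_apply]
  exact congrArg _ (Finset.sum_congr rfl fun σ _ => Quotient.inductionOn' σ fun _ => rfl)

theorem wedgeList_compLinearMap (θ : V →ₗ[ℝ] V) :
    ∀ (m : ℕ) (ω : Fin m → V [⋀^Fin 2]→ₗ[ℝ] ℝ),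
      (wedgeList m ω).compLinearMap θ = wedgeList m (fun a => (ω a).compLinearMap θ)
  | 0, _ => rfl
  | m + 1, ω => by
    change altCast _
      ((altWedge (wedgeList m fun a => ω a.castSucc) (ω (Fin.last m))).compLinearMap θ) = _
    rw [altWedge_compLinearMap, wedgeList_compLinearMap θ m]
    rfl

end Wedge

section KroneckerDelta

open Equiv

variable {m n : ℕ}

theorem sgnIJ_eq_sum (I J : Fin m → Fin n) :
    sgnIJ I J = ∑ τ : Perm (Fin m), if J = I ∘ τ then ((Perm.sign τ : ℤ) : ℝ) else 0 := by
  by_cases hI : Function.Injective I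
  · by_cases hJ : ∃ τ : Perm (Fin m), J = I ∘ τ
    · rw [sgnIJ, dif_pos ⟨hI, hJ⟩, Finset.sum_eq_single_of_mem _ (Finset.mem_univ _),
        if_pos hJ.choose_spec]
      intro τ _ hτ
      exact if_neg fun h => hτ (Perm.ext fun a => hI (congrFun (h.symm.trans hJ.choose_spec) a))
    · rw [sgnIJ, dif_neg (fun h => hJ h.2),
        Finset.sum_eq_zero fun τ _ => if_neg fun h => hJ ⟨τ, h⟩]
  · rw [sgnIJ, dif_neg (fun h => hI h.1)]
    obtain ⟨a₁, a₂, hI₁₂, hne⟩ := Function.not_injective_iff.mp hI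
    have hcomp : ∀ τ : Perm (Fin m), I ∘ ⇑(swap a₁ a₂ * τ) = I ∘ τ := fun τ =>
      funext fun a => Equiv.apply_swap_eq_self hI₁₂ _
    refine (Finset.sum_ninvolution (fun τ => swap a₁ a₂ * τ) (fun τ => ?_) (fun τ _ h => ?_)
      (fun _ => Finset.mem_univ _) (fun τ => swap_mul_self_mul _ _ _)).symm
    · rw [hcomp, Perm.sign_mul, Perm.sign_swap hne]
      split_ifs <;> push_cast <;> ring
    · exact hne (swap_eq_one_iff.mp (mul_right_cancel (h.trans (one_mul τ).symm)))

theorem sum_sgnIJ_mul (I : Fin m → Fin n) (f : (Fin m → Fin n) → ℝ) :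
    ∑ J, sgnIJ I J * f J = ∑ τ : Perm (Fin m), ((Perm.sign τ : ℤ) : ℝ) * f (I ∘ τ) := by
  simp only [sgnIJ_eq_sum, Finset.sum_mul, ite_mul, zero_mul]
  rw [Finset.sum_comm]
  simp

theorem sum_sgnIJ_mul_prod {A B : Matrix (Fin n) (Fin n) ℝ} (hBA : B * A = 1)
    (P Q : Fin m → Fin n) :
    ∑ I, ∑ J, sgnIJ I J * ∏ a, A (I a) (P a) * B (Q a) (J a) = sgnIJ P Q := by
  have hτ : ∀ τ : Perm (Fin m), ∑ I : Fin m → Fin n, ∏ a, A (I a) (P a) * B (Q a) (I (τ a))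
      = if Q = P ∘ τ then 1 else 0 := by
    intro τ
    calc _ = ∑ I : Fin m → Fin n, ∏ a, B (Q (τ.symm a)) (I a) * A (I a) (P a) := by
          refine Finset.sum_congr rfl fun I _ => ?_
          rw [Finset.prod_mul_distrib, Finset.prod_mul_distrib, mul_comm,
            ← Equiv.prod_comp τ (fun a => B (Q (τ.symm a)) (I a))]
          simp
      _ = ∏ a, (B * A) (Q (τ.symm a)) (P a) := by
          simp only [Matrix.mul_apply]
          exact (Fintype.prod_sum fun a j => B (Q (τ.symm a)) j * A j (P a)).symm
      _ = if Q = P ∘ τ then 1 else 0 := by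
          have hQP : (∀ a, Q (τ.symm a) = P a) ↔ Q = P ∘ τ :=
            ⟨fun h => funext fun a => by simpa using h (τ a), fun h a => by simp [h]⟩
          simp only [hBA, Matrix.one_apply, Fintype.prod_boole, hQP]
  simp only [sum_sgnIJ_mul, Finset.sum_comm (γ := Fin m → Fin n), ← Finset.mul_sum,
    Function.comp_apply, hτ, sgnIJ_eq_sum P Q, mul_ite, mul_one, mul_zero]

end KroneckerDelta

section PontryaginForm

variable {n : ℕ}

theorem pontryaginForm_compLinearMap (k : ℕ) (Ω : Fin n → Fin n → V [⋀^Fin 2]→ₗ[ℝ] ℝ)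
    (θ : V →ₗ[ℝ] V) :
    (pontryaginForm n k Ω).compLinearMap θ
      = pontryaginForm n k (fun i j => (Ω i j).compLinearMap θ) := by
  change AlternatingMap.compLinearMapₗ θ (pontryaginForm n k Ω) = _
  simp only [pontryaginForm, map_smul, map_sum]
  refine congrArg _ (Finset.sum_congr rfl fun I _ => Finset.sum_congr rfl fun J _ => ?_)
  exact congrArg (sgnIJ I J • altCast _ ·) (wedgeList_compLinearMap θ _ _)

theorem pontryaginForm_smul (k : ℕ) (c : ℝ) (Ω : Fin n → Fin n → V [⋀^Fin 2]→ₗ[ℝ] ℝ) :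
    pontryaginForm n k (fun i j => c • Ω i j) = c ^ (2 * k) • pontryaginForm n k Ω := by
  simp only [pontryaginForm, wedgeList_smul, altCast_eq_domDomCongrₗ, map_smul, Finset.smul_sum,
    smul_comm (c ^ (2 * k))]

theorem pontryaginForm_conj (k : ℕ) {A B : Matrix (Fin n) (Fin n) ℝ} (hBA : B * A = 1)
    (Ω : Fin n → Fin n → V [⋀^Fin 2]→ₗ[ℝ] ℝ) :
    pontryaginForm n k (fun i j => ∑ p, ∑ q, (A i p * B q j) • Ω p q) = pontryaginForm n k Ω := by
  have hexpand : ∀ I J : Fin (2 * k) → Fin n,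
      wedgeList (2 * k) (fun a => ∑ p, ∑ q, (A (I a) p * B q (J a)) • Ω p q)
        = ∑ T : Fin (2 * k) → Fin n × Fin n, (∏ a, A (I a) (T a).1 * B (T a).2 (J a)) •
            wedgeList (2 * k) (fun a => Ω (T a).1 (T a).2) := fun I J => by
    simp only [← Fintype.sum_prod_type']
    exact wedgeList_sum_smul _ (fun a (t : Fin n × Fin n) => A (I a) t.1 * B t.2 (J a))
      (fun t => Ω t.1 t.2)
  have hreindex : ∀ f : (Fin (2 * k) → Fin n) → (Fin (2 * k) → Fin n) → V [⋀^Fin (4 * k)]→ₗ[ℝ] ℝ,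
      ∑ I, ∑ J, f I J
        = ∑ T : Fin (2 * k) → Fin n × Fin n, f (fun a => (T a).1) (fun a => (T a).2) :=
    fun f => by
      rw [← Fintype.sum_prod_type']
      exact (Fintype.sum_equiv (Equiv.arrowProdEquivProdArrow _ _ _) _ _ fun _ => rfl).symm
  unfold pontryaginForm
  congr 1
  simp only [hexpand, altCast_eq_domDomCongrₗ, map_sum, map_smul, Finset.smul_sum, smul_smul]
  conv_rhs => rw [hreindex]
  conv_lhs => enter [2, I]; rw [Finset.sum_comm]
  rw [Finset.sum_comm]
  simp only [← Finset.sum_smul, sum_sgnIJ_mul_prod hBA]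

end PontryaginForm

namespace Matrix

variable {ι : Type*} [Fintype ι] [DecidableEq ι]

theorem det_ne_zero_of_transpose_mul_mul_eq {G P : Matrix ι ι ℝ} (hG : G.det ≠ 0)
    (hP : Pᵀ * G * P = G) : P.det ≠ 0 := by
  intro h0
  apply hG
  rw [← hP, det_mul, det_mul, h0, mul_zero]

theorem eq_smul_conj_of_transpose_mul_mul_eq {G P M M' : Matrix ι ι ℝ} {c : ℝ} (hG : G.det ≠ 0)
    (hP : Pᵀ * G * P = G) (h : Pᵀ * (M' * G) * P = c • (M * G)) :
    M' = c • ((Pᵀ)⁻¹ * M * Pᵀ) := by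
  have hPdet := det_ne_zero_of_transpose_mul_mul_eq hG hP
  have hGP : IsUnit (G * P) := (isUnit_iff_isUnit_det _).mpr (by simp [hG, hPdet])
  have hPM : Pᵀ * M' = c • (M * Pᵀ) := by
    refine hGP.mul_left_inj.mp ?_
    calc Pᵀ * M' * (G * P) = Pᵀ * (M' * G) * P := by simp only [Matrix.mul_assoc]
      _ = c • (M * (Pᵀ * G * P)) := by rw [h, hP]
      _ = c • (M * Pᵀ) * (G * P) := by simp only [Matrix.mul_assoc, Matrix.smul_mul]
  calc M' = (Pᵀ)⁻¹ * (Pᵀ * M') := by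
        rw [← Matrix.mul_assoc, nonsing_inv_mul _ (by simpa using hPdet), Matrix.one_mul]
    _ = c • ((Pᵀ)⁻¹ * M * Pᵀ) := by rw [hPM, Matrix.mul_smul, Matrix.mul_assoc]

end Matrix

section CurvatureMatrix

variable {n : ℕ}

noncomputable def IsACT.bilinForm {C : V → V → V → V → ℝ} (hC : IsACT C) (x y : V) :
    LinearMap.BilinForm ℝ V :=
  LinearMap.mk₂ ℝ (C x y)
    (fun u u' v => (linearMapOfMapSmulAdd (C x y · v) (hC.1.2.2.1 · x y · · v)).map_add u u')
    (fun a u v => (linearMapOfMapSmulAdd (C x y · v) (hC.1.2.2.1 · x y · · v)).map_smul a u)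
    (fun u v v' => (linearMapOfMapSmulAdd (C x y u) (hC.1.2.2.2 · x y u)).map_add v v')
    (fun a u v => (linearMapOfMapSmulAdd (C x y u) (hC.1.2.2.2 · x y u)).map_smul a v)

theorem IsACT.bilinForm_apply {C : V → V → V → V → ℝ} (hC : IsACT C) (x y u v : V) :
    hC.bilinForm x y u v = C x y u v := rfl

/-- Row `i` holds the coordinates of `R(x,y) eᵢ`, so this is the transpose of the matrix of
`R(x,y)`. -/
def evalCurvMatrix (Ω : Fin n → Fin n → V [⋀^Fin 2]→ₗ[ℝ] ℝ) (x y : V) :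
    Matrix (Fin n) (Fin n) ℝ :=
  Matrix.of fun i j => Ω i j ![x, y]

variable {g : LinearMap.BilinForm ℝ V} {C : V → V → V → V → ℝ} {e : Module.Basis (Fin n) ℝ V}
  {Ω : Fin n → Fin n → V [⋀^Fin 2]→ₗ[ℝ] ℝ}

theorem evalCurvMatrix_mul_toMatrix (hC : IsACT C) (hΩ : IsCurvMatrix g C (fun i => e i) Ω)
    (x y : V) :
    evalCurvMatrix Ω x y * LinearMap.BilinForm.toMatrix e g
      = LinearMap.BilinForm.toMatrix e (hC.bilinForm x y) := by
  ext i m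
  rw [Matrix.mul_apply, LinearMap.BilinForm.toMatrix_apply, hC.bilinForm_apply, hΩ]
  simp only [evalCurvMatrix, Matrix.of_apply, LinearMap.BilinForm.toMatrix_apply]

theorem evalCurvMatrix_pullback (hC : IsACT C) (hgnd : g.SeparatingLeft)
    (hΩ : IsCurvMatrix g C (fun i => e i) Ω) {θ : V →ₗ[ℝ] V} (hθ : ∀ x y, g (θ x) (θ y) = g x y)
    {ε : ℝ} (hε : ∀ u v x y, C (θ u) (θ v) (θ x) (θ y) = ε * C u v x y) :
    ∃ A B : Matrix (Fin n) (Fin n) ℝ, B * A = 1 ∧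
      ∀ x y, evalCurvMatrix Ω (θ x) (θ y) = ε • (A * evalCurvMatrix Ω x y * B) := by
  have hG := (Matrix.separatingLeft_iff_det_ne_zero).mp
    (LinearMap.BilinForm.SeparatingLeft.toMatrix hgnd e)
  have hP : (LinearMap.toMatrix e e θ)ᵀ * LinearMap.BilinForm.toMatrix e g *
      LinearMap.toMatrix e e θ = LinearMap.BilinForm.toMatrix e g := by
    rw [← LinearMap.BilinForm.toMatrix_comp]
    exact congrArg _ (LinearMap.ext₂ hθ)
  refine ⟨((LinearMap.toMatrix e e θ)ᵀ)⁻¹, (LinearMap.toMatrix e e θ)ᵀ,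
    Matrix.mul_nonsing_inv _ ?_, fun x y => Matrix.eq_smul_conj_of_transpose_mul_mul_eq hG hP ?_⟩
  · simpa [isUnit_iff_ne_zero] using Matrix.det_ne_zero_of_transpose_mul_mul_eq hG hP
  · rw [evalCurvMatrix_mul_toMatrix hC hΩ, evalCurvMatrix_mul_toMatrix hC hΩ,
      ← LinearMap.BilinForm.toMatrix_comp, ← map_smul]
    exact congrArg _ (LinearMap.ext₂ fun u v => hε x y u v)

theorem compLinearMap_eq_of_evalCurvMatrix {θ : V →ₗ[ℝ] V} {c : ℝ}
    {A B : Matrix (Fin n) (Fin n) ℝ}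
    (h : ∀ x y, evalCurvMatrix Ω (θ x) (θ y) = c • (A * evalCurvMatrix Ω x y * B)) (i j : Fin n) :
    (Ω i j).compLinearMap θ = c • ∑ p, ∑ q, (A i p * B q j) • Ω p q := by
  ext v
  have hv : v = ![v 0, v 1] := by ext a; fin_cases a <;> rfl
  have hθv : (fun a => θ (v a)) = ![θ (v 0), θ (v 1)] := by ext a; fin_cases a <;> rfl
  have hij := congrFun (congrFun (h (v 0) (v 1)) i) j
  simp only [evalCurvMatrix, Matrix.smul_apply, Matrix.mul_apply, Matrix.of_apply, Finset.sum_mul,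
    ← hv] at hij
  rw [AlternatingMap.compLinearMap_apply, hθv, hij, Finset.sum_comm]
  simp only [AlternatingMap.smul_apply, sum_apply, smul_eq_mul, mul_right_comm]

end CurvatureMatrix

theorem pontryaginForm_fixed_of_even_or_odd_general
    {n : ℕ}
    (g : LinearMap.BilinForm ℝ V)
    (hgnd : ∀ x : V, (∀ y, g x y = 0) → x = 0)
    (e : Module.Basis (Fin n) ℝ V)
    (C : V → V → V → V → ℝ) (hC : IsACT C)
    (Ω : Fin n → Fin n → (V [⋀^Fin 2]→ₗ[ℝ] ℝ))
    (hΩ : IsCurvMatrix g C (fun i => e i) Ω)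
    (θ : V →ₗ[ℝ] V) (hθ : ∀ x y, g (θ x) (θ y) = g x y)
    (heo : (∀ u v x y : V, C (θ u) (θ v) (θ x) (θ y) = C u v x y) ∨
           (∀ u v x y : V, C (θ u) (θ v) (θ x) (θ y) = -C u v x y))
    (k : ℕ) :
    (pontryaginForm n k Ω).compLinearMap θ = pontryaginForm n k Ω := by
  obtain ⟨ε, hε2, hε⟩ : ∃ ε : ℝ, ε ^ 2 = 1 ∧
      ∀ u v x y : V, C (θ u) (θ v) (θ x) (θ y) = ε * C u v x y := by
    rcases heo with h | h
    · exact ⟨1, one_pow 2, fun u v x y => by rw [h, one_mul]⟩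
    · exact ⟨-1, by norm_num, fun u v x y => by rw [h, neg_one_mul]⟩
  obtain ⟨A, B, hBA, hΩθ⟩ := evalCurvMatrix_pullback hC hgnd hΩ hθ hε
  rw [pontryaginForm_compLinearMap, funext₂ (compLinearMap_eq_of_evalCurvMatrix hΩθ),
    pontryaginForm_smul, pontryaginForm_conj k hBA, pow_mul, hε2, one_pow, one_smul]

/-- If an algebraic curvature tensor `C` on an `n`-dimensional scalar
product space is `θ`-even or `θ`-odd for an isometry `θ`, then for `1 ≤ k ≤ ⌊n/2⌋`
the `k`-th Pontryagin form of `C` is fixed by the pullback along `θ`. -/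
theorem pontryaginForm_fixed_of_even_or_odd
    {n : ℕ} [FiniteDimensional ℝ V]
    (g : LinearMap.BilinForm ℝ V)
    (hgsymm : ∀ x y, g x y = g y x)
    (hgnd : ∀ x : V, (∀ y, g x y = 0) → x = 0)
    (e : Module.Basis (Fin n) ℝ V)
    (C : V → V → V → V → ℝ) (hC : IsACT C)
    (Ω : Fin n → Fin n → (V [⋀^Fin 2]→ₗ[ℝ] ℝ))
    (hΩ : IsCurvMatrix g C (fun i => e i) Ω)
    (θ : V →ₗ[ℝ] V) (hθ : ∀ x y, g (θ x) (θ y) = g x y)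
    (heo : (∀ u v x y : V, C (θ u) (θ v) (θ x) (θ y) = C u v x y) ∨
           (∀ u v x y : V, C (θ u) (θ v) (θ x) (θ y) = -C u v x y))
    (k : ℕ) (hk1 : 1 ≤ k) (hk2 : 2*k ≤ n) :
    (pontryaginForm n k Ω).compLinearMap θ = pontryaginForm n k Ω :=
  pontryaginForm_fixed_of_even_or_odd_general g hgnd e C hC Ω hΩ θ hθ heo k
end

section
/- Let (V, g) be an n-dimensional scalar product space with basis (e₁, …, e_n), let C be an algebraic curvature tensor on V with curvature operator Ĉ, and let Ω^{ij} ∈ ∧²V* be the 2-forms with Ω^{ij} = −Ω^{ji} determined by Ĉ(ξ) = Σ_{i,j∈[n]} Ω^{ij}(ξ) e_i ∧ e_j. Then for all 1 ≤ k ≤ ⌊n/2⌋, the kth *-power of Ĉ satisfies Ĉ^{*k} = Σ_{I ∈ [n]^{2k}} (Ω^{i₁i₂} ∧ ⋯ ∧ Ω^{i_{2k−1}i_{2k}}) ⊗ e_I. -/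
open ExteriorAlgebra

variable {V : Type} [AddCommGroup V] [Module ℝ V]

/-!
Induction on `k`. If `Ĉ^{*k}(ξ) = Σ_I α_I(ξ) e_I` and `Ĉ(ξ) = Σ_J β_J(ξ) e_J`, then the shuffle
sum defining `Ĉ^{*k} * Ĉ` is, coefficient by coefficient, the shuffle sum defining `α_I ∧ β_J`, so
`Ĉ^{*(k+1)} = Σ_{I,J} (α_I ∧ β_J) ⊗ (e_I ∧ e_J)`; concatenating `I` and `J` enumerates `[n]^{2k+2}`.
-/

lemma Fin.comp_append {α β : Type*} {p q : ℕ} (f : α → β) (a : Fin p → α) (b : Fin q → α) :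
    f ∘ Fin.append a b = Fin.append (f ∘ a) (f ∘ b) := by
  funext i
  induction i using Fin.addCases <;> simp

lemma altWedge_apply {p q : ℕ} (α : V [⋀^Fin p]→ₗ[ℝ] ℝ) (β : V [⋀^Fin q]→ₗ[ℝ] ℝ)
    (x : Fin (p + q) → V) :
    altWedge α β x = ((p.factorial * q.factorial : ℕ) : ℝ)⁻¹ *
      ∑ σ : Equiv.Perm (Fin (p + q)), ((Equiv.Perm.sign σ : ℤ) : ℝ) *
        (α (fun i => x (σ (Fin.castAdd q i))) * β (fun j => x (σ (Fin.natAdd p j)))) := by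
  have h := congrArg (fun F => TensorProduct.lid ℝ ℝ (F (x ∘ finSumFinEquiv)))
    (MultilinearMap.domCoprod_alternization_eq α β)
  simp only [MultilinearMap.alternatization_apply, AlternatingMap.smul_apply,
    MultilinearMap.domDomCongr_apply, MultilinearMap.domCoprod_apply,
    AlternatingMap.coe_multilinearMap, map_sum, Units.smul_def, map_zsmul, Fintype.card_fin,
    map_nsmul, Function.comp_apply, TensorProduct.lid_tmul] at h
  rw [eq_inv_mul_iff_mul_eq₀ (by positivity), ← nsmul_eq_mul]
  refine (Eq.trans (Fintype.sum_equiv (Equiv.permCongr finSumFinEquiv.symm) _ _ fun σ => ?_)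
    h).symm
  simp [Equiv.Perm.sign_permCongr]

lemma wedgeList_zero_apply (ω : Fin 0 → V [⋀^Fin 2]→ₗ[ℝ] ℝ) (x : Fin (2 * 0) → V) :
    wedgeList 0 ω x = 1 :=
  rfl

lemma wedgeList_succ_apply (m : ℕ) (ω : Fin (m + 1) → V [⋀^Fin 2]→ₗ[ℝ] ℝ)
    (x : Fin (2 * (m + 1)) → V) :
    wedgeList (m + 1) ω x = altWedge (wedgeList m (fun a => ω a.castSucc)) (ω (Fin.last m)) x :=
  rfl

lemma wedgeList_one (ω : Fin 1 → V [⋀^Fin 2]→ₗ[ℝ] ℝ) (x : Fin 2 → V) :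
    wedgeList 1 ω x = ω 0 x := by
  have hσ : ∀ σ : Equiv.Perm (Fin 2), ((Equiv.Perm.sign σ : ℤ) : ℝ) *
      (wedgeList 0 (fun a => ω a.castSucc) (fun i => x (σ (Fin.castAdd 2 i))) *
        ω (Fin.last 0) (fun j => x (σ (Fin.natAdd 0 j)))) = ω 0 x := by
    intro σ
    have hx : (fun j => x (σ (Fin.natAdd 0 j))) = x ∘ σ := funext fun j => by simp
    rw [hx, AlternatingMap.map_perm, wedgeList_zero_apply]
    rcases Int.units_eq_one_or (Equiv.Perm.sign σ) with h | h <;> simp [h]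
  rw [wedgeList_succ_apply, altWedge_apply, Finset.sum_congr rfl fun σ _ => hσ σ]
  simp [Fintype.card_perm]

lemma IsStarMul.apply_eq_sum {p q : ℕ} {ι κ : Type*} [Fintype ι] [Fintype κ]
    {A : Module.End ℝ (⋀[ℝ]^p V)} {B : Module.End ℝ (⋀[ℝ]^q V)}
    {AB : Module.End ℝ (⋀[ℝ]^(p + q) V)} (h : IsStarMul p q A B AB)
    (α : ι → V [⋀^Fin p]→ₗ[ℝ] ℝ) (ξ : ι → ExteriorAlgebra ℝ V)
    (hA : ∀ v, (A (iMultiP p v) : ExteriorAlgebra ℝ V) = ∑ i, α i v • ξ i)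
    (β : κ → V [⋀^Fin q]→ₗ[ℝ] ℝ) (η : κ → ExteriorAlgebra ℝ V)
    (hB : ∀ v, (B (iMultiP q v) : ExteriorAlgebra ℝ V) = ∑ j, β j v • η j)
    (x : Fin (p + q) → V) :
    (AB (iMultiP (p + q) x) : ExteriorAlgebra ℝ V)
      = ∑ i, ∑ j, altWedge (α i) (β j) x • (ξ i * η j) := by
  simp only [h x, hA, hB, Finset.sum_mul_sum, smul_mul_smul_comm, altWedge_apply, mul_smul,
    Finset.sum_smul, Finset.smul_sum]
  rw [Finset.sum_comm]
  exact Finset.sum_congr rfl fun i _ => Finset.sum_comm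

def pairedForms {n m : ℕ} (Ω : Fin n → Fin n → V [⋀^Fin 2]→ₗ[ℝ] ℝ) (I : Fin (2 * m) → Fin n) :
    Fin m → V [⋀^Fin 2]→ₗ[ℝ] ℝ :=
  fun a => Ω (I ⟨2 * a, by omega⟩) (I ⟨2 * a + 1, by omega⟩)

lemma wedgeList_pairedForms_append {n m : ℕ} (Ω : Fin n → Fin n → V [⋀^Fin 2]→ₗ[ℝ] ℝ)
    (I : Fin (2 * m) → Fin n) (J : Fin 2 → Fin n) (x : Fin (2 * (m + 1)) → V) :
    wedgeList (m + 1) (pairedForms Ω (Fin.append I J)) x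
      = altWedge (wedgeList m (pairedForms Ω I)) (Ω (J 0) (J 1)) x := by
  have hI : (fun a : Fin m => pairedForms Ω (Fin.append I J) a.castSucc) = pairedForms Ω I :=
    funext fun a => congrArg₂ Ω (Fin.append_left I J ⟨2 * a, by omega⟩)
      (Fin.append_left I J ⟨2 * a + 1, by omega⟩)
  have hJ : pairedForms Ω (Fin.append I J) (Fin.last m) = Ω (J 0) (J 1) :=
    congrArg₂ Ω (Fin.append_right I J 0) (Fin.append_right I J 1)
  rw [wedgeList_succ_apply, hI, hJ]

lemma coe_apply_iMultiP_two_eq_sum {n : ℕ} {T : Module.End ℝ (⋀[ℝ]^2 V)} (e : Fin n → V)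
    (Ω : Fin n → Fin n → V [⋀^Fin 2]→ₗ[ℝ] ℝ)
    (hT : ∀ u v : V, T (iMultiP 2 ![u, v]) = ∑ i, ∑ j, Ω i j ![u, v] • iMultiP 2 ![e i, e j])
    (w : Fin 2 → V) :
    (T (iMultiP 2 w) : ExteriorAlgebra ℝ V)
      = ∑ J : Fin 2 → Fin n, Ω (J 0) (J 1) w • ιMulti ℝ 2 (e ∘ J) := by
  have hw : ![w 0, w 1] = w := by
    funext i
    fin_cases i <;> rfl
  rw [← hw, hT, ← (finTwoArrowEquiv (Fin n)).symm.sum_comp, Fintype.sum_prod_type]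
  simp only [Submodule.coe_sum, Submodule.coe_smul, finTwoArrowEquiv_symm_apply]
  rfl

theorem coe_apply_iMultiP_eq_sum_wedgeList {n : ℕ} {T : Module.End ℝ (⋀[ℝ]^2 V)}
    (e : Fin n → V) (Ω : Fin n → Fin n → V [⋀^Fin 2]→ₗ[ℝ] ℝ)
    (hT : ∀ u v : V, T (iMultiP 2 ![u, v]) = ∑ i, ∑ j, Ω i j ![u, v] • iMultiP 2 ![e i, e j])
    (P : (j : ℕ) → Module.End ℝ (⋀[ℝ]^(2 * j) V)) (hP1 : P 1 = T)
    (hPsucc : ∀ j : ℕ, 1 ≤ j → IsStarMul (2 * j) 2 (P j) T (P (j + 1)))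
    {k : ℕ} (hk : 1 ≤ k) (x : Fin (2 * k) → V) :
    (P k (iMultiP (2 * k) x) : ExteriorAlgebra ℝ V)
      = ∑ I : Fin (2 * k) → Fin n, wedgeList k (pairedForms Ω I) x • ιMulti ℝ (2 * k) (e ∘ I) := by
  induction k, hk using Nat.le_induction with
  | base =>
    subst hP1
    simp only [coe_apply_iMultiP_two_eq_sum e Ω hT, wedgeList_one]
    rfl
  | succ k hk ih =>
    calc (P (k + 1) (iMultiP (2 * (k + 1)) x) : ExteriorAlgebra ℝ V)
        = ∑ I : Fin (2 * k) → Fin n, ∑ J : Fin 2 → Fin n,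
            altWedge (wedgeList k (pairedForms Ω I)) (Ω (J 0) (J 1)) x •
              (ιMulti ℝ (2 * k) (e ∘ I) * ιMulti ℝ 2 (e ∘ J)) :=
          (hPsucc k hk).apply_eq_sum _ _ ih _ _ (coe_apply_iMultiP_two_eq_sum e Ω hT) x
      _ = ∑ I : Fin (2 * k) → Fin n, ∑ J : Fin 2 → Fin n,
            wedgeList (k + 1) (pairedForms Ω (Fin.append I J)) x •
              ιMulti ℝ (2 * k + 2) (e ∘ Fin.append I J) := by
          simp only [wedgeList_pairedForms_append, ιMulti_mul_ιMulti, Fin.comp_append]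
      _ = _ := by
          rw [← Fintype.sum_prod_type']
          exact (Fin.appendEquiv (2 * k) 2).sum_comp fun I : Fin (2 * (k + 1)) → Fin n =>
            wedgeList (k + 1) (pairedForms Ω I) x • ιMulti ℝ (2 * (k + 1)) (e ∘ I)

/-- If `Ĉ(ξ) = Σ_{i,j} Ω^{ij}(ξ) e_i ∧ e_j` with `Ω^{ij} = -Ω^{ji}`, then
`Ĉ^{*k} = Σ_{I ∈ [n]^{2k}} (Ω^{i₁i₂} ∧ ⋯ ∧ Ω^{i_{2k-1}i_{2k}}) ⊗ e_I`. -/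
theorem starPower_expansion
    {n : ℕ}
    (e : Module.Basis (Fin n) ℝ V)
    (Chat : Module.End ℝ (⋀[ℝ]^2 V))
    (Ω : Fin n → Fin n → (V [⋀^Fin 2]→ₗ[ℝ] ℝ))
    (hΩ : ∀ u v : V, Chat (iMultiP 2 ![u, v])
      = ∑ i : Fin n, ∑ j : Fin n, Ω i j ![u, v] • iMultiP 2 ![e i, e j])
    (P : (j : ℕ) → Module.End ℝ (⋀[ℝ]^(2*j) V))
    (hP1 : P 1 = Chat)
    (hPsucc : ∀ j : ℕ, 1 ≤ j → IsStarMul (2*j) 2 (P j) Chat (P (j+1)))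
    (k : ℕ) (hk1 : 1 ≤ k) :
    ∀ x : Fin (2*k) → V,
      P k (iMultiP (2*k) x)
        = ∑ I : Fin (2*k) → Fin n,
            (wedgeList k (fun a => Ω (I ⟨2*(a : ℕ), by have := a.isLt; omega⟩)
                                     (I ⟨2*(a : ℕ)+1, by have := a.isLt; omega⟩))) x •
              iMultiP (2*k) (fun a => e (I a)) := by
  intro x
  apply Subtype.ext
  rw [coe_apply_iMultiP_eq_sum_wedgeList e Ω hΩ P hP1 hPsucc hk1 x]
  simp only [Submodule.coe_sum, Submodule.coe_smul]
  rfl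
end
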